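/- arXiv:0907.4505 — 4 statements merged into one kernel-verified Lean document; each statement's English description precedes it below -/
import Mathlib

section
/- For any partition α with at most n parts and any positive integer b, the product of the elementary symmetric polynomial e_b and the Schur polynomial s_α in n variables equals the sum of Schur polynomials s_β over all partitions β with at most n parts such that β contains α, |β| = |α| + b, and β/α is a vertical strip (i.e., β_i - α_i ∈ {0,1} for all i). -/
/-!
Let `E` be the matrix whose `j`-th column holds the coefficients of `∏_{i ≠ j} (1 - x_i t)`.
Since `∑ h_m t^m = ∏_i 1 / (1 - x_i t)`, this polynomial times `∑ h_m t^m` is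
`1 / (1 - x_j t)`, so the Jacobi–Trudi matrix of `β` times `E` is the alternant
`(x_j ^ (β_i + n - 1 - i))`.
Hence `s_β · det E = a_{β+δ}`, and `det E` is, up to sign, a Vandermonde determinant, so it can
be cancelled. Multiplying the permutation expansion of `a_{α+δ}` by `e_b = ∑_{|S| = b} x^S`
and transporting `S` along each permutation gives `e_b a_{α+δ} = ∑_{|S| = b} a_{α+1_S+δ}`,
hence `e_b s_α = ∑_{|S| = b} s_{α+1_S}`. When `α + 1_S` is not a partition it has adjacent
rows with `β_{k+1} = β_k + 1`, so two rows of its Jacobi–Trudi matrix coincide and the term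
vanishes; the surviving `α + 1_S` are exactly the vertical strips over `α`.
-/

open MvPolynomial

/-- Complete homogeneous symmetric polynomial in `n` variables, indexed by an
integer, with the convention `h_k = 0` for `k < 0` and `h_0 = 1`. -/
noncomputable def hInt (n : ℕ) (k : ℤ) : MvPolynomial (Fin n) ℤ :=
  if 0 ≤ k then hsymm (Fin n) ℤ k.toNat else 0

/-- The Schur polynomial of `α` in `n` variables, defined via the
Jacobi–Trudi determinant `s_α = det (h_{α_i - i + j})_{i,j}`. -/
noncomputable def schur (n : ℕ) (α : Fin n → ℕ) : MvPolynomial (Fin n) ℤ :=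
  Matrix.det (Matrix.of fun i j : Fin n => hInt n ((α i : ℤ) - (i : ℕ) + (j : ℕ)))

/-- A symmetric polynomial is Schur positive if it is a nonnegative integer
combination of Schur polynomials of partitions. -/
def SchurPositive (n : ℕ) (f : MvPolynomial (Fin n) ℤ) : Prop :=
  ∃ c : (Fin n → ℕ) →₀ ℕ, (∀ lam ∈ c.support, Antitone lam) ∧
    f = c.sum fun lam k => (k : ℤ) • schur n lam

namespace PowerSeries

variable {R : Type*} [CommRing R]

theorem one_sub_C_mul_X_mul_mk_pow (x : R) : (1 - C x * X) * mk (x ^ ·) = 1 := by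
  have := congrArg (rescale x) (mk_one_mul_one_sub_eq_one R)
  rw [map_mul, map_sub, map_one, rescale_X, rescale_mk] at this
  simpa [mul_comm] using this

theorem coeff_prod_one_sub_C_mul_X_eq_zero {ι : Type*} (s : Finset ι) (a : ι → R) {r : ℕ}
    (hr : s.card < r) : coeff r (∏ i ∈ s, (1 - C (a i) * X)) = 0 := by
  classical
  induction s using Finset.induction_on generalizing r with
  | empty => simp [coeff_one, Nat.pos_iff_ne_zero.mp hr]
  | insert j s hj ih =>
    rw [Finset.card_insert_of_notMem hj] at hr
    obtain ⟨r, rfl⟩ : ∃ r', r = r' + 1 := ⟨r - 1, by omega⟩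
    rw [Finset.prod_insert hj, sub_mul, one_mul, map_sub, mul_assoc, coeff_C_mul,
      coeff_succ_X_mul, ih (by omega), ih (by omega), mul_zero, sub_zero]

end PowerSeries

def addOneAt {ι : Type*} [DecidableEq ι] (γ : ι → ℕ) (S : Finset ι) (i : ι) : ℕ :=
  γ i + if i ∈ S then 1 else 0

section addOneAt

variable {ι : Type*} [Fintype ι] [DecidableEq ι]

theorem sum_addOneAt (γ : ι → ℕ) (S : Finset ι) :
    ∑ i, addOneAt γ S i = ∑ i, γ i + S.card := by
  simp [addOneAt, Finset.sum_add_distrib]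

theorem filter_addOneAt_eq (γ : ι → ℕ) (S : Finset ι) :
    Finset.univ.filter (fun i => addOneAt γ S i = γ i + 1) = S := by
  ext i
  by_cases hi : i ∈ S <;> simp [addOneAt, hi]

theorem addOneAt_filter_eq {γ β : ι → ℕ} (h : ∀ i, γ i ≤ β i ∧ β i ≤ γ i + 1) :
    addOneAt γ (Finset.univ.filter fun i => β i = γ i + 1) = β := by
  funext i
  have := h i
  simp only [addOneAt, Finset.mem_filter, Finset.mem_univ, true_and]
  split_ifs <;> omega

end addOneAt

namespace MvPolynomial

variable {σ R : Type*} [Fintype σ] [DecidableEq σ]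

theorem mk_hsymm_eq_prod [CommSemiring R] :
    PowerSeries.mk (hsymm σ R) = ∏ i, PowerSeries.mk ((X i : MvPolynomial σ R) ^ ·) := by
  refine PowerSeries.ext fun m => ?_
  rw [PowerSeries.coeff_prod, PowerSeries.coeff_mk, hsymm]
  refine Finset.sum_bij' (fun (s : Sym σ m) _ => Multiset.toFinsupp s.1)
    (fun l hl => ⟨Finsupp.toMultiset l, ?_⟩) ?_ ?_ ?_ ?_ ?_
  · rw [Finsupp.card_toMultiset, Finsupp.sum_fintype _ _ fun _ => rfl]
    exact (Finset.mem_finsuppAntidiag.1 hl).1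
  · intro s _
    refine Finset.mem_finsuppAntidiag.2 ⟨?_, Finset.subset_univ _⟩
    have := Finsupp.card_toMultiset (Multiset.toFinsupp s.1)
    rw [Multiset.toFinsupp_toMultiset, s.2, Finsupp.sum_fintype _ _ fun _ => rfl] at this
    exact this.symm
  · exact fun _ _ => Finset.mem_univ _
  · exact fun s _ => Subtype.ext (Multiset.toFinsupp_toMultiset _)
  · intro l _; simp
  · intro s _
    simp only [PowerSeries.coeff_mk, Multiset.toFinsupp_apply]
    rw [Finset.prod_multiset_map_count]
    exact Finset.prod_subset (Finset.subset_univ _) fun x _ hx => by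
      rw [Multiset.count_eq_zero_of_notMem (by simpa using hx), pow_zero]

variable [CommRing R]

theorem prod_erase_one_sub_C_mul_X_mul_mk_hsymm (j : σ) :
    (∏ i ∈ Finset.univ.erase j, (1 - PowerSeries.C (X i : MvPolynomial σ R) * PowerSeries.X)) *
      PowerSeries.mk (hsymm σ R) = PowerSeries.mk ((X j : MvPolynomial σ R) ^ ·) := by
  rw [mk_hsymm_eq_prod, ← Finset.mul_prod_erase _ _ (Finset.mem_univ j), mul_left_comm,
    ← Finset.prod_mul_distrib,
    Finset.prod_congr rfl fun i _ => PowerSeries.one_sub_C_mul_X_mul_mk_pow _,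
    Finset.prod_const_one, mul_one]

theorem esymm_mul_det_pow (b : ℕ) (γ : σ → ℕ) :
    esymm σ R b * (Matrix.of fun i j => (X j : MvPolynomial σ R) ^ γ i).det =
      ∑ S ∈ Finset.powersetCard b Finset.univ,
        (Matrix.of fun i j => (X j : MvPolynomial σ R) ^ addOneAt γ S i).det := by
  simp only [Matrix.det_apply, esymm, Finset.sum_mul, Finset.mul_sum]
  refine Eq.trans ?_ Finset.sum_comm
  refine Finset.sum_congr rfl fun τ _ => ?_
  refine Finset.sum_nbij' (·.map τ.toEmbedding) (·.map τ.symm.toEmbedding) ?_ ?_ ?_ ?_ ?_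
  · simp
  · simp
  · intro T _; ext; simp
  · intro S _; ext; simp
  · intro T _
    simp only [Matrix.of_apply, addOneAt, Finset.mem_map_equiv, Equiv.symm_apply_apply, pow_add,
      Finset.prod_mul_distrib, pow_ite, pow_one, pow_zero, Finset.prod_ite_mem, Finset.univ_inter]
    rw [mul_smul_comm, mul_comm]

end MvPolynomial

theorem hInt_natCast (n m : ℕ) : hInt n m = hsymm (Fin n) ℤ m := by
  simp [hInt]

theorem hInt_of_neg {n : ℕ} {k : ℤ} (hk : k < 0) : hInt n k = 0 :=
  if_neg hk.not_ge

noncomputable def elemSeries (n : ℕ) (j : Fin n) : PowerSeries (MvPolynomial (Fin n) ℤ) :=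
  ∏ i ∈ Finset.univ.erase j, (1 - PowerSeries.C (X i) * PowerSeries.X)

theorem sum_coeff_elemSeries_mul_hInt (n : ℕ) (j : Fin n) (m : ℕ) :
    ∑ r ∈ Finset.range n, PowerSeries.coeff r (elemSeries n j) * hInt n (m - r) = X j ^ m := by
  set f := fun r : ℕ => PowerSeries.coeff r (elemSeries n j) * hInt n (m - r)
  have hf (r : ℕ) (hr : min n (m + 1) ≤ r) : f r = 0 := by
    simp only [f]
    rcases min_le_iff.1 hr with hr | hr
    · rw [elemSeries, PowerSeries.coeff_prod_one_sub_C_mul_X_eq_zero _ _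
        ((Finset.card_erase_lt_of_mem (Finset.mem_univ j)).trans_le (by simpa using hr)), zero_mul]
    · rw [hInt_of_neg (by omega), mul_zero]
  have hsum (N : ℕ) (hN : min n (m + 1) ≤ N) :
      ∑ r ∈ Finset.range N, f r = ∑ r ∈ Finset.range (min n (m + 1)), f r :=
    (Finset.sum_subset (Finset.range_subset_range.2 hN) fun r _ hr =>
      hf r (not_lt.1 (Finset.mem_range.not.1 hr))).symm
  have hcoeff := congrArg (PowerSeries.coeff m)
    (prod_erase_one_sub_C_mul_X_mul_mk_hsymm (R := ℤ) j)
  rw [PowerSeries.coeff_mul, Finset.Nat.sum_antidiagonal_eq_sum_range_succ_mk] at hcoeff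
  simp only [PowerSeries.coeff_mk] at hcoeff
  rw [hsum n (min_le_left _ _), ← hsum (m + 1) (min_le_right _ _), ← hcoeff]
  refine Finset.sum_congr rfl fun r hr => ?_
  rw [Finset.mem_range] at hr
  simp only [f, elemSeries]
  rw [← Nat.cast_sub (by omega), hInt_natCast]

noncomputable def elemMatrix (n : ℕ) : Matrix (Fin n) (Fin n) (MvPolynomial (Fin n) ℤ) :=
  .of fun k j => PowerSeries.coeff (n - 1 - k) (elemSeries n j)

theorem jacobiTrudi_mul_elemMatrix (n : ℕ) (β : Fin n → ℕ) :
    Matrix.of (fun i k : Fin n => hInt n ((β i : ℤ) - (i : ℕ) + (k : ℕ))) * elemMatrix n =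
      .of fun i j => X j ^ (β i + (n - 1 - i)) := by
  refine Matrix.ext fun i j => ?_
  rw [Matrix.mul_apply, Matrix.of_apply, ← sum_coeff_elemSeries_mul_hInt,
    ← Finset.sum_range_reflect]
  refine (Fin.sum_univ_eq_sum_range (fun k => hInt n ((β i : ℤ) - (i : ℕ) + k) *
    PowerSeries.coeff (n - 1 - k) (elemSeries n j)) n).trans
    (Finset.sum_congr rfl fun k hk => ?_)
  rw [Finset.mem_range] at hk
  rw [mul_comm]
  congr 2
  omega

theorem schur_mul_det_elemMatrix (n : ℕ) (β : Fin n → ℕ) :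
    schur n β * (elemMatrix n).det =
      (Matrix.of fun i j : Fin n =>
        (X j : MvPolynomial (Fin n) ℤ) ^ (β i + (n - 1 - i))).det := by
  rw [schur, ← Matrix.det_mul, jacobiTrudi_mul_elemMatrix]

theorem schur_zero (n : ℕ) : schur n 0 = 1 := by
  rw [schur, Matrix.det_of_isUpperTriangular]
  · exact Finset.prod_eq_one fun i _ => by simp [hInt, hsymm_zero]
  · intro i j hij
    exact hInt_of_neg (by simpa using hij)

theorem det_elemMatrix_ne_zero (n : ℕ) : (elemMatrix n).det ≠ 0 := by
  have h := schur_mul_det_elemMatrix n 0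
  rw [schur_zero, one_mul] at h
  have hV : (Matrix.of fun i j : Fin n =>
      (X j : MvPolynomial (Fin n) ℤ) ^ ((0 : Fin n → ℕ) i + (n - 1 - i))) =
      (Matrix.vandermonde X).transpose.submatrix Fin.revPerm id := by
    refine Matrix.ext fun i j => ?_
    simp [Matrix.vandermonde_apply, Fin.val_rev, Nat.sub_sub, add_comm]
  rw [h, hV, Matrix.det_permute, Matrix.det_transpose]
  exact mul_ne_zero (by simp) (Matrix.det_vandermonde_ne_zero_iff.2 X_injective)

theorem esymm_mul_schur (n b : ℕ) (α : Fin n → ℕ) :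
    esymm (Fin n) ℤ b * schur n α =
      ∑ S ∈ Finset.powersetCard b Finset.univ, schur n (addOneAt α S) := by
  apply mul_right_cancel₀ (det_elemMatrix_ne_zero n)
  simp_rw [Finset.sum_mul, mul_assoc, schur_mul_det_elemMatrix, esymm_mul_det_pow]
  refine Finset.sum_congr rfl fun S _ => ?_
  simp only [addOneAt, add_right_comm]

theorem schur_eq_zero_of_covBy {n : ℕ} {β : Fin n → ℕ} {i j : Fin n} (hij : i ⋖ j)
    (hβ : β j = β i + 1) : schur n β = 0 := by
  refine Matrix.det_zero_of_row_eq hij.ne (funext fun k => ?_)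
  rw [Fin.covBy_iff, Nat.covBy_iff_add_one_eq] at hij
  simp only [Matrix.of_apply, hβ, ← hij]
  congr 1
  push_cast
  ring

theorem schur_addOneAt_eq_zero {n : ℕ} {α : Fin n → ℕ} (hα : Antitone α)
    {S : Finset (Fin n)} (hS : ¬ Antitone (addOneAt α S)) : schur n (addOneAt α S) = 0 := by
  obtain ⟨i, j, hij, hlt⟩ : ∃ i j, i ⋖ j ∧ addOneAt α S i < addOneAt α S j := by
    simpa [antitone_iff_forall_covBy] using hS
  refine schur_eq_zero_of_covBy hij ?_
  -- an ascent of `α + 1_S` over the antitone `α` forces `α i = α j`, `i ∉ S`, `j ∈ S`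
  have := hα hij.le
  simp only [addOneAt] at hlt ⊢
  split_ifs at hlt ⊢ <;> omega

theorem sum_filter_antitone_schur_addOneAt (n b : ℕ) (α : Fin n → ℕ) :
    ∑ S ∈ (Finset.powersetCard b Finset.univ).filter (fun S => Antitone (addOneAt α S)),
        schur n (addOneAt α S) =
    ∑ β ∈ Finset.univ.filter
        (fun β : Fin n → Fin ((∑ i, α i) + b + 1) =>
          Antitone (fun i => (β i : ℕ)) ∧
          (∀ i : Fin n, α i ≤ (β i : ℕ) ∧ (β i : ℕ) ≤ α i + 1) ∧
          (∑ i, (β i : ℕ)) = (∑ i, α i) + b),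
      schur n (fun i => (β i : ℕ)) := by
  have hlt {S} (hS : S ∈ Finset.powersetCard b Finset.univ) i :
      addOneAt α S i < ∑ i, α i + b + 1 := by
    rw [Finset.mem_powersetCard_univ] at hS
    have := Finset.single_le_sum (fun j _ => Nat.zero_le (addOneAt α S j)) (Finset.mem_univ i)
    rw [sum_addOneAt, hS] at this
    omega
  refine Finset.sum_bij' (fun S hS i => ⟨addOneAt α S i, hlt (Finset.mem_filter.1 hS).1 i⟩)
    (fun β _ => Finset.univ.filter fun i => (β i : ℕ) = α i + 1) ?_ ?_ ?_ ?_ ?_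
  · intro S hS
    rw [Finset.mem_filter, Finset.mem_powersetCard_univ] at hS
    refine Finset.mem_filter.2
      ⟨Finset.mem_univ _, hS.2, fun i => ?_, by simp [sum_addOneAt, hS.1]⟩
    simp only [addOneAt]
    split_ifs <;> omega
  · intro β hβ
    obtain ⟨-, hanti, hstrip, hsum⟩ := Finset.mem_filter.1 hβ
    have hβ' := addOneAt_filter_eq hstrip
    refine Finset.mem_filter.2 ⟨Finset.mem_powersetCard_univ.2 ?_, hβ' ▸ hanti⟩
    have := sum_addOneAt α (Finset.univ.filter fun i => (β i : ℕ) = α i + 1)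
    rw [hβ', hsum] at this
    omega
  · exact fun S _ => filter_addOneAt_eq α S
  · intro β hβ
    funext i
    exact Fin.ext (congrFun (addOneAt_filter_eq (Finset.mem_filter.1 hβ).2.2.1) i)
  · exact fun S _ => rfl

theorem pieri_rule_esymm_general (n b : ℕ) (α : Fin n → ℕ) (hα : Antitone α) :
    esymm (Fin n) ℤ b * schur n α =
    ∑ β ∈ Finset.univ.filter
        (fun β : Fin n → Fin ((∑ i, α i) + b + 1) =>
          (∀ i j : Fin n, i ≤ j → (β j : ℕ) ≤ (β i : ℕ)) ∧
          (∀ i : Fin n, α i ≤ (β i : ℕ) ∧ (β i : ℕ) ≤ α i + 1) ∧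
          (∑ i, (β i : ℕ)) = (∑ i, α i) + b),
      schur n (fun i => (β i : ℕ)) := by
  have hpartition (S : Finset (Fin n)) (hS : schur n (addOneAt α S) ≠ 0) :
      Antitone (addOneAt α S) :=
    by_contra fun h => hS (schur_addOneAt_eq_zero hα h)
  rw [esymm_mul_schur, ← Finset.sum_filter_of_ne fun S _ => hpartition S]
  exact sum_filter_antitone_schur_addOneAt n b α

/-- Pieri's rule: `e_b · s_α = Σ_β s_β`, the sum over partitions `β ⊇ α` with
`|β| = |α| + b` such that `β/α` is a vertical strip. -/
theorem pieri_rule_esymm (n b : ℕ) (hb : 0 < b) (α : Fin n → ℕ) (hα : Antitone α) :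
    esymm (Fin n) ℤ b * schur n α =
    ∑ β ∈ Finset.univ.filter
        (fun β : Fin n → Fin ((∑ i, α i) + b + 1) =>
          (∀ i j : Fin n, i ≤ j → (β j : ℕ) ≤ (β i : ℕ)) ∧
          (∀ i : Fin n, α i ≤ (β i : ℕ) ∧ (β i : ℕ) ≤ α i + 1) ∧
          (∑ i, (β i : ℕ)) = (∑ i, α i) + b),
      schur n (fun i => (β i : ℕ)) :=
  pieri_rule_esymm_general n b α hα
end

section
/- Let A be a symmetric polynomial in n variables that is a nonnegative integer combination of monomials, say A = Σ_i x^{W_i} where each W_i ∈ ℕ^n. Then there exists a partition λ such that λ + W_i is a partition (weakly decreasing) for every i, and for any such λ, the product A · s_λ equals Σ_i s_{λ + W_i}; in particular A · s_λ is Schur positive. -/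
open MvPolynomial

section Aux
open Finset

variable {n : ℕ}

/-- complete homogeneous over a list of variables, recursive. -/
noncomputable def hL : List (Fin n) → ℕ → MvPolynomial (Fin n) ℤ
  | [], 0 => 1
  | [], _+1 => 0
  | _ :: _, 0 => 1
  | x :: l, (m+1) => hL l (m+1) + X x * hL (x :: l) m
  termination_by l m => (l.length, m)

/-- elementary symmetric over a list of variables, recursive. -/
noncomputable def eL : List (Fin n) → ℕ → MvPolynomial (Fin n) ℤ
  | [], 0 => 1
  | [], _+1 => 0
  | _ :: _, 0 => 1
  | x :: l, (m+1) => eL l (m+1) + X x * eL l m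

noncomputable def hZ (l : List (Fin n)) (k : ℤ) : MvPolynomial (Fin n) ℤ :=
  if 0 ≤ k then hL l k.toNat else 0

noncomputable def eZ (l : List (Fin n)) (k : ℤ) : MvPolynomial (Fin n) ℤ :=
  if 0 ≤ k then eL l k.toNat else 0

@[simp] lemma hL_zero (l : List (Fin n)) : hL l 0 = 1 := by
  cases l <;> simp [hL]

@[simp] lemma eL_zero (l : List (Fin n)) : eL l 0 = 1 := by
  cases l <;> simp [eL]

lemma hL_cons (x : Fin n) (l : List (Fin n)) (m : ℕ) :
    hL (x :: l) (m+1) = hL l (m+1) + X x * hL (x :: l) m := by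
  rw [hL]

lemma eL_cons (x : Fin n) (l : List (Fin n)) (m : ℕ) :
    eL (x :: l) (m+1) = eL l (m+1) + X x * eL l m := by
  rw [eL]

@[simp] lemma hZ_neg (l : List (Fin n)) {k : ℤ} (h : k < 0) : hZ l k = 0 := by
  simp [hZ, not_le.2 h]

@[simp] lemma hZ_zero (l : List (Fin n)) : hZ l 0 = 1 := by simp [hZ]

@[simp] lemma eZ_zero (l : List (Fin n)) : eZ l 0 = 1 := by simp [eZ]

@[simp] lemma hZ_natCast (l : List (Fin n)) (m : ℕ) : hZ l (m : ℤ) = hL l m := by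
  simp [hZ]

@[simp] lemma eZ_natCast (l : List (Fin n)) (m : ℕ) : eZ l (m : ℤ) = eL l m := by
  simp [eZ]

lemma hZ_cons (x : Fin n) (l : List (Fin n)) (k : ℤ) :
    hZ (x :: l) k = hZ l k + X x * hZ (x :: l) (k - 1) := by
  rcases lt_trichotomy k 0 with h | rfl | h
  · rw [hZ_neg _ h, hZ_neg _ h, hZ_neg _ (by omega)]; ring
  · rw [hZ_neg _ (show (0:ℤ) - 1 < 0 by omega)]; simp
  · obtain ⟨m, rfl⟩ : ∃ m : ℕ, k = ((m+1 : ℕ) : ℤ) := ⟨(k-1).toNat, by omega⟩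
    have h1 : ((m+1:ℕ) : ℤ) - 1 = ((m : ℕ) : ℤ) := by push_cast; ring
    rw [h1, hZ_natCast, hZ_natCast, hZ_natCast, hL_cons]

lemma eZ_cons (x : Fin n) (l : List (Fin n)) (k : ℤ) :
    eZ (x :: l) k = eZ l k + X x * eZ l (k - 1) := by
  rcases lt_trichotomy k 0 with h | rfl | h
  · rw [eZ, eZ, eZ, if_neg (by omega), if_neg (by omega), if_neg (by omega)]; ring
  · have : eZ l (0 - 1) = 0 := by rw [eZ, if_neg (by omega)]
    rw [this]; simp
  · obtain ⟨m, rfl⟩ : ∃ m : ℕ, k = ((m+1 : ℕ) : ℤ) := ⟨(k-1).toNat, by omega⟩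
    have h1 : ((m+1:ℕ) : ℤ) - 1 = ((m : ℕ) : ℤ) := by push_cast; ring
    rw [h1, eZ_natCast, eZ_natCast, eZ_natCast, eL_cons]

lemma eZ_of_length_lt (l : List (Fin n)) (k : ℤ) (h : (l.length : ℤ) < k) : eZ l k = 0 := by
  induction l generalizing k with
  | nil =>
    obtain ⟨m, rfl⟩ : ∃ m : ℕ, k = (m : ℤ) := ⟨k.toNat, by omega⟩
    obtain ⟨m', rfl⟩ : ∃ m' : ℕ, m = m' + 1 := ⟨m - 1, by omega⟩
    simp [eZ, eL]
  | cons x l ih =>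
    rw [eZ_cons, ih _ (by simp at h ⊢; omega), ih _ (by simp at h ⊢; omega)]
    ring

lemma hZ_nil (m : ℤ) : hZ ([] : List (Fin n)) m = if m = 0 then 1 else 0 := by
  rcases lt_trichotomy m 0 with h | rfl | h
  · rw [hZ_neg _ h, if_neg (by omega)]
  · simp
  · obtain ⟨m', rfl⟩ : ∃ m' : ℕ, m = ((m' + 1 : ℕ) : ℤ) := ⟨(m-1).toNat, by omega⟩
    rw [hZ_natCast, if_neg (by positivity), hL]

lemma key_sum (l : List (Fin n)) (m : ℤ) :
    ∑ r ∈ range (l.length + 1), (-1 : MvPolynomial (Fin n) ℤ)^r * eZ l (r : ℤ) * hZ l (m - r)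
      = if m = 0 then 1 else 0 := by
  induction l generalizing m with
  | nil => simpa using hZ_nil m
  | cons x l ih =>
    have hG : ∀ t : ℤ, ∑ r ∈ range (l.length + 1),
        (-1 : MvPolynomial (Fin n) ℤ)^r * eZ l (r : ℤ) * hZ (x :: l) (t - r)
        = (if t = 0 then 1 else 0)
          + X x * ∑ r ∈ range (l.length + 1),
              (-1 : MvPolynomial (Fin n) ℤ)^r * eZ l (r : ℤ) * hZ (x :: l) (t - 1 - r) := by
      intro t
      rw [← ih t, Finset.mul_sum, ← Finset.sum_add_distrib]
      refine Finset.sum_congr rfl fun r _ => ?_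
      rw [hZ_cons x l (t - r)]
      have e1 : t - r - 1 = t - 1 - r := by ring
      rw [e1]; ring
    have split : ∀ r : ℕ, (-1 : MvPolynomial (Fin n) ℤ)^r * eZ (x::l) (r : ℤ) * hZ (x::l) (m - r)
        = (-1)^r * eZ l (r : ℤ) * hZ (x::l) (m - r)
          + X x * ((-1)^r * eZ l ((r : ℤ) - 1) * hZ (x::l) (m - r)) := by
      intro r; rw [eZ_cons]; ring
    show ∑ r ∈ range (l.length + 1 + 1), _ = _
    rw [Finset.sum_congr rfl (fun r _ => split r), Finset.sum_add_distrib]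
    have first : ∑ r ∈ range (l.length + 1 + 1),
        (-1 : MvPolynomial (Fin n) ℤ)^r * eZ l (r : ℤ) * hZ (x::l) (m - r)
        = ∑ r ∈ range (l.length + 1),
        (-1 : MvPolynomial (Fin n) ℤ)^r * eZ l (r : ℤ) * hZ (x::l) (m - r) := by
      rw [Finset.sum_range_succ, eZ_of_length_lt l _ (by push_cast; omega)]
      simp
    have second : ∑ r ∈ range (l.length + 1 + 1),
        X x * ((-1 : MvPolynomial (Fin n) ℤ)^r * eZ l ((r : ℤ) - 1) * hZ (x::l) (m - r))
        = X x * -∑ r ∈ range (l.length + 1),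
        (-1 : MvPolynomial (Fin n) ℤ)^r * eZ l (r : ℤ) * hZ (x::l) (m - 1 - r) := by
      rw [Finset.sum_range_succ']
      have e0 : eZ l (((0:ℕ) : ℤ) - 1) = 0 := by rw [eZ, if_neg (by omega)]
      rw [e0]
      have : ∀ r ∈ range (l.length + 1),
          X x * ((-1 : MvPolynomial (Fin n) ℤ)^(r+1) * eZ l (((r+1:ℕ) : ℤ) - 1) * hZ (x::l) (m - (r+1:ℕ)))
          = -(X x * ((-1)^r * eZ l (r : ℤ) * hZ (x::l) (m - 1 - r))) := by
        intro r _
        have e1 : ((r+1:ℕ) : ℤ) - 1 = (r : ℤ) := by push_cast; ring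
        have e2 : m - ((r+1:ℕ) : ℤ) = m - 1 - r := by push_cast; ring
        rw [e1, e2, pow_succ]
        ring
      rw [Finset.sum_congr rfl this, mul_neg, Finset.mul_sum]
      simp
    rw [first, second, hG m]
    ring

lemma expand_cons (x : Fin n) (l : List (Fin n)) (t : ℤ) :
    ∑ r ∈ range (l.length + 1),
        (-1 : MvPolynomial (Fin n) ℤ)^r * eZ l (r : ℤ) * hZ (x :: l) (t - r)
      = (if t = 0 then 1 else 0)
        + X x * ∑ r ∈ range (l.length + 1),
            (-1 : MvPolynomial (Fin n) ℤ)^r * eZ l (r : ℤ) * hZ (x :: l) (t - 1 - r) := by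
  rw [← key_sum l t, Finset.mul_sum, ← Finset.sum_add_distrib]
  refine Finset.sum_congr rfl fun r _ => ?_
  rw [hZ_cons x l (t - r)]
  have e1 : t - r - 1 = t - 1 - r := by ring
  rw [e1]; ring

lemma key_pow (x : Fin n) (l : List (Fin n)) (m : ℕ) :
    ∑ r ∈ range (l.length + 1),
        (-1 : MvPolynomial (Fin n) ℤ)^r * eZ l (r : ℤ) * hZ (x :: l) ((m : ℤ) - r)
      = X x ^ m := by
  induction m with
  | zero =>
    rw [expand_cons, if_pos (by norm_num)]
    have : ∀ r ∈ range (l.length + 1),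
        (-1 : MvPolynomial (Fin n) ℤ)^r * eZ l (r : ℤ) * hZ (x :: l) (((0:ℕ) : ℤ) - 1 - r)
          = 0 := by
      intro r _
      rw [hZ_neg _ (by push_cast; omega)]; ring
    rw [Finset.sum_congr rfl this]
    simp
  | succ m ih =>
    rw [expand_cons, if_neg (by push_cast; omega)]
    have : ∀ r ∈ range (l.length + 1),
        (-1 : MvPolynomial (Fin n) ℤ)^r * eZ l (r : ℤ) * hZ (x :: l) (((m+1:ℕ) : ℤ) - 1 - r)
          = (-1 : MvPolynomial (Fin n) ℤ)^r * eZ l (r : ℤ) * hZ (x :: l) ((m : ℤ) - r) := by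
      intro r _
      have e1 : ((m+1:ℕ) : ℤ) - 1 - r = (m : ℤ) - r := by push_cast; ring
      rw [e1]
    rw [Finset.sum_congr rfl this, ih, pow_succ]
    ring

noncomputable def hF (S : Finset (Fin n)) (m : ℕ) : MvPolynomial (Fin n) ℤ :=
  ∑ μ ∈ S.sym m, (μ.1.map X).prod

lemma hF_zero (S : Finset (Fin n)) : hF S 0 = 1 := by
  simp [hF, Finset.sym_zero]
  rfl

lemma hF_empty (m : ℕ) : hF (∅ : Finset (Fin n)) (m+1) = 0 := by
  simp [hF, Finset.sym_empty]

lemma hF_insert (x : Fin n) (S : Finset (Fin n)) (hx : x ∉ S) (m : ℕ) :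
    hF (insert x S) (m+1) = hF S (m+1) + X x * hF (insert x S) m := by
  classical
  rw [hF, ← Finset.sum_filter_add_sum_filter_not ((insert x S).sym (m+1)) (fun μ => x ∈ μ)]
  have h1 : Finset.filter (fun μ => ¬ x ∈ μ) ((insert x S).sym (m+1)) = S.sym (m+1) := by
    ext μ
    simp only [Finset.mem_filter, Finset.mem_sym_iff]
    constructor
    · rintro ⟨h, hxμ⟩ a ha
      rcases Finset.mem_insert.mp (h a ha) with rfl | h'
      · exact absurd ha hxμ
      · exact h'
    · intro h
      refine ⟨fun a ha => Finset.mem_insert_of_mem (h a ha), fun hxμ => hx (h x hxμ)⟩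
  have h2 : ∑ μ ∈ Finset.filter (fun μ => x ∈ μ) ((insert x S).sym (m+1)), (μ.1.map X).prod
      = X x * hF (insert x S) m := by
    rw [hF, Finset.mul_sum]
    refine (Finset.sum_bij (fun τ _ => x ::ₛ τ) ?_ ?_ ?_ ?_).symm
    · intro τ hτ
      simp only [Finset.mem_filter, Finset.mem_sym_iff]
      refine ⟨fun a ha => ?_, Sym.mem_cons_self x τ⟩
      rcases Sym.mem_cons.mp ha with rfl | h'
      · exact Finset.mem_insert_self a S
      · exact Finset.mem_sym_iff.mp hτ a h'
    · intro τ₁ _ τ₂ _ h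
      exact (Sym.cons_inj_right x τ₁ τ₂).mp h
    · intro μ hμ
      obtain ⟨hμs, hxμ⟩ := Finset.mem_filter.mp hμ
      obtain ⟨τ, rfl⟩ := Sym.exists_cons_of_mem hxμ
      refine ⟨τ, ?_, rfl⟩
      refine Finset.mem_sym_iff.mpr fun a ha => ?_
      exact Finset.mem_sym_iff.mp hμs a (Sym.mem_cons_of_mem ha)
    · intro τ _
      rw [show ((x ::ₛ τ : Sym (Fin n) (m+1)).val) = x ::ₘ τ.val from rfl,
        Multiset.map_cons, Multiset.prod_cons]
  rw [h1, h2]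
  exact add_comm _ _

lemma hF_univ (m : ℕ) : hF (univ : Finset (Fin n)) m = hsymm (Fin n) ℤ m := by
  rw [hsymm, hF, Finset.sym_univ]

lemma hL_eq_hF : ∀ (l : List (Fin n)), l.Nodup → ∀ m, hL l m = hF l.toFinset m := by
  intro l
  induction l with
  | nil =>
    intro _ m
    cases m with
    | zero => rw [hL_zero, hF_zero]
    | succ m =>
      rw [List.toFinset_nil, hF_empty]
      rw [hL]
  | cons x l ih =>
    intro hnd m
    obtain ⟨hx, hnd'⟩ := List.nodup_cons.mp hnd
    have hx' : x ∉ l.toFinset := by simpa using hx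
    induction m with
    | zero => rw [hL_zero, hF_zero]
    | succ m ihm =>
      rw [hL_cons, ih hnd' (m+1), ihm, List.toFinset_cons, hF_insert x _ hx' m]

lemma hZ_eq_hInt (l : List (Fin n)) (hl : l.Nodup) (hu : l.toFinset = univ) (k : ℤ) :
    hZ l k = hInt n k := by
  rw [hZ, hInt]
  split
  · rw [hL_eq_hF l hl, hu, hF_univ]
  · rfl

noncomputable def restList (j : Fin n) : List (Fin n) :=
  (List.finRange n).filter (fun a => a ≠ j)

lemma mem_restList {j a : Fin n} : a ∈ restList j ↔ a ≠ j := by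
  simp [restList]

lemma nodup_restList (j : Fin n) : (restList j).Nodup :=
  (List.nodup_finRange n).filter _

lemma nodup_cons_restList (j : Fin n) : (j :: restList j).Nodup := by
  refine List.nodup_cons.mpr ⟨fun h => ?_, nodup_restList j⟩
  exact (mem_restList.mp h) rfl

lemma toFinset_cons_restList (j : Fin n) : (j :: restList j).toFinset = univ := by
  ext a
  simp only [List.toFinset_cons, Finset.mem_insert, List.mem_toFinset, mem_restList,
    Finset.mem_univ, iff_true]
  by_cases h : a = j
  · exact Or.inl h
  · exact Or.inr h

lemma length_restList (j : Fin n) : (restList j).length = n - 1 := by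
  have h1 : (j :: restList j).toFinset.card = (j :: restList j).length :=
    List.toFinset_card_of_nodup (nodup_cons_restList j)
  rw [toFinset_cons_restList j] at h1
  simp only [Finset.card_univ, Fintype.card_fin, List.length_cons] at h1
  omega

lemma hZ_cons_restList (j : Fin n) (k : ℤ) : hZ (j :: restList j) k = hInt n k :=
  hZ_eq_hInt _ (nodup_cons_restList j) (toFinset_cons_restList j) k

noncomputable def Vmat (β : Fin n → ℕ) : Matrix (Fin n) (Fin n) (MvPolynomial (Fin n) ℤ) :=
  Matrix.of fun i j => X j ^ β i

noncomputable def aPol (β : Fin n → ℕ) : MvPolynomial (Fin n) ℤ := (Vmat β).det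

noncomputable def Hmat (μ : Fin n → ℕ) : Matrix (Fin n) (Fin n) (MvPolynomial (Fin n) ℤ) :=
  Matrix.of fun i k => hInt n ((μ i : ℤ) - (i : ℕ) + (k : ℕ))

noncomputable def Bmat : Matrix (Fin n) (Fin n) (MvPolynomial (Fin n) ℤ) :=
  Matrix.of fun k j => (-1 : MvPolynomial (Fin n) ℤ)^(n - 1 - (k : ℕ))
    * eZ (restList j) ((n : ℤ) - 1 - (k : ℕ))

lemma schur_eq_det_Hmat (μ : Fin n → ℕ) : schur n μ = (Hmat μ).det := rfl

lemma Hmat_mul_Bmat (μ : Fin n → ℕ) :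
    Hmat μ * Bmat = Vmat (fun i => μ i + (n - 1 - (i : ℕ))) := by
  refine Matrix.ext fun i j => ?_
  rw [Matrix.mul_apply]
  show ∑ k : Fin n, hInt n ((μ i : ℤ) - (i : ℕ) + (k : ℕ)) *
      ((-1 : MvPolynomial (Fin n) ℤ)^(n - 1 - (k : ℕ)) * eZ (restList j) ((n : ℤ) - 1 - (k : ℕ)))
    = X j ^ (μ i + (n - 1 - (i : ℕ)))
  rw [← Equiv.sum_comp (Fin.revPerm : Equiv.Perm (Fin n))
    (fun k => hInt n ((μ i : ℤ) - (i : ℕ) + (k : ℕ)) *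
      ((-1 : MvPolynomial (Fin n) ℤ)^(n - 1 - (k : ℕ)) * eZ (restList j) ((n : ℤ) - 1 - (k : ℕ))))]
  have hterm : ∀ k : Fin n,
      hInt n ((μ i : ℤ) - (i : ℕ) + ((Fin.revPerm k : Fin n) : ℕ)) *
        ((-1 : MvPolynomial (Fin n) ℤ)^(n - 1 - ((Fin.revPerm k : Fin n) : ℕ))
          * eZ (restList j) ((n : ℤ) - 1 - ((Fin.revPerm k : Fin n) : ℕ)))
      = (-1 : MvPolynomial (Fin n) ℤ)^(k : ℕ) * eZ (restList j) ((k : ℕ) : ℤ)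
          * hZ (j :: restList j) (((μ i + (n - 1 - (i : ℕ)) : ℕ) : ℤ) - (k : ℕ)) := by
    intro k
    have hik : (i : ℕ) ≤ n - 1 ∧ (k : ℕ) ≤ n - 1 := ⟨by omega, by omega⟩
    have hrev : ((Fin.revPerm k : Fin n) : ℕ) = n - 1 - (k : ℕ) := by
      show ((Fin.rev k : Fin n) : ℕ) = n - 1 - (k : ℕ)
      rw [Fin.val_rev]
      omega
    rw [hrev, hZ_cons_restList]
    have e1 : (n : ℤ) - 1 - ((n - 1 - (k : ℕ) : ℕ) : ℤ) = ((k : ℕ) : ℤ) := by omega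
    have e2 : n - 1 - (n - 1 - (k : ℕ)) = (k : ℕ) := by omega
    have e3 : (μ i : ℤ) - (i : ℕ) + ((n - 1 - (k : ℕ) : ℕ) : ℤ)
        = ((μ i + (n - 1 - (i : ℕ)) : ℕ) : ℤ) - ((k : ℕ) : ℤ) := by push_cast; omega
    rw [e1, e2, e3]
    ring
  rw [Finset.sum_congr rfl (fun k _ => hterm k)]
  rw [Fin.sum_univ_eq_sum_range (fun r => (-1 : MvPolynomial (Fin n) ℤ)^r * eZ (restList j) (r : ℤ)
      * hZ (j :: restList j) (((μ i + (n - 1 - (i : ℕ)) : ℕ) : ℤ) - (r : ℕ)))]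
  have hn : n = (restList j).length + 1 := by
    have := length_restList j
    have : 1 ≤ n := j.pos
    omega
  rw [show Finset.range n = Finset.range ((restList j).length + 1) by rw [← hn]]
  exact key_pow j (restList j) (μ i + (n - 1 - (i : ℕ)))

lemma det_Hmat_zero : (Hmat (fun _ => 0) : Matrix (Fin n) (Fin n) _).det = 1 := by
  have htri : (Hmat (fun _ => 0) : Matrix (Fin n) (Fin n) _).BlockTriangular id := by
    intro i j hij
    show hInt n (((0:ℕ) : ℤ) - (i : ℕ) + (j : ℕ)) = 0
    rw [hInt, if_neg (by simp at hij ⊢; omega)]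
  rw [Matrix.det_of_upperTriangular htri]
  refine Finset.prod_eq_one fun i _ => ?_
  show hInt n (((0:ℕ) : ℤ) - (i : ℕ) + (i : ℕ)) = 1
  rw [show ((0:ℕ) : ℤ) - (i : ℕ) + (i : ℕ) = ((0:ℕ) : ℤ) by ring, hInt, if_pos (by omega)]
  simp

lemma det_Bmat : (Bmat : Matrix (Fin n) (Fin n) _).det = aPol (fun i => n - 1 - (i : ℕ)) := by
  have h := Hmat_mul_Bmat (n := n) (fun _ => 0)
  have hdet := congrArg Matrix.det h
  rw [Matrix.det_mul, det_Hmat_zero, one_mul] at hdet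
  rw [hdet, aPol]
  norm_num

lemma jacobi_trudi (μ : Fin n → ℕ) :
    aPol (fun i => n - 1 - (i : ℕ)) * schur n μ = aPol (fun i => μ i + (n - 1 - (i : ℕ))) := by
  rw [← det_Bmat, schur_eq_det_Hmat, aPol, ← Hmat_mul_Bmat, Matrix.det_mul]
  ring

lemma aPol_delta_ne_zero : (aPol (fun i => n - 1 - (i : ℕ)) : MvPolynomial (Fin n) ℤ) ≠ 0 := by
  have hsub : (Vmat (fun i => n - 1 - (i : ℕ)) : Matrix (Fin n) (Fin n) _)
      = Matrix.submatrix
          (Matrix.transpose (Matrix.vandermonde (fun j => (X j : MvPolynomial (Fin n) ℤ))))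
          (Fin.revPerm : Equiv.Perm (Fin n)) id := by
    refine Matrix.ext fun i j => ?_
    show (X j : MvPolynomial (Fin n) ℤ) ^ (n - 1 - (i : ℕ)) = X j ^ ((Fin.rev i : Fin n) : ℕ)
    congr 1
    rw [Fin.val_rev]
    omega
  rw [aPol, hsub, Matrix.det_permute, Matrix.det_transpose, Matrix.det_vandermonde]
  refine mul_ne_zero ?_ ?_
  · rcases Int.units_eq_one_or (Equiv.Perm.sign (Fin.revPerm : Equiv.Perm (Fin n))) with h | h <;>
      rw [h] <;> norm_num
  · rw [Finset.prod_ne_zero_iff]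
    intro i _
    rw [Finset.prod_ne_zero_iff]
    intro j hj
    refine sub_ne_zero.mpr ?_
    exact fun hXX => (Finset.mem_Ioi.mp hj).ne' (MvPolynomial.X_injective hXX)


lemma rename_prod_pow (sg : Equiv.Perm (Fin n)) (γ : Fin n → ℕ) :
    rename (⇑sg) (∏ i, (X i : MvPolynomial (Fin n) ℤ) ^ γ i)
      = ∏ i, (X i : MvPolynomial (Fin n) ℤ) ^ γ (sg.symm i) := by
  rw [map_prod]
  simp_rw [map_pow, rename_X]
  rw [← Equiv.prod_comp sg (fun i => (X i : MvPolynomial (Fin n) ℤ) ^ γ (sg.symm i))]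
  exact Finset.prod_congr rfl fun i _ => by rw [Equiv.symm_apply_apply]

lemma monomial_one_eq_prod (s : Fin n →₀ ℕ) :
    (monomial s (1:ℤ) : MvPolynomial (Fin n) ℤ) = ∏ i, (X i) ^ s i := by
  rw [monomial_eq, C_1, one_mul]
  exact Finsupp.prod_fintype _ _ (fun i => pow_zero _)

lemma multiset_finset_sum_comm {α β M : Type*} [AddCommMonoid M] (W : Multiset α)
    (S : Finset β) (g : β → α → M) :
    ∑ b ∈ S, (W.map (g b)).sum = (W.map fun a => ∑ b ∈ S, g b a).sum := by
  induction W using Multiset.induction with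
  | empty => simp
  | cons a W ih => simp [Multiset.map_cons, Multiset.sum_cons, Finset.sum_add_distrib, ih]

section Amul

variable {W : Multiset (Fin n →₀ ℕ)} {A : MvPolynomial (Fin n) ℤ}

lemma A_mul_prod (hAW : A = (W.map fun w => monomial w (1 : ℤ)).sum) (γ : Fin n → ℕ) :
    A * ∏ i, (X i : MvPolynomial (Fin n) ℤ) ^ γ i
      = (W.map fun w => ∏ i, (X i : MvPolynomial (Fin n) ℤ) ^ (w i + γ i)).sum := by
  rw [hAW, ← Multiset.sum_map_mul_right]
  refine congrArg Multiset.sum (Multiset.map_congr rfl fun w _ => ?_)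
  rw [monomial_one_eq_prod, ← Finset.prod_mul_distrib]
  exact Finset.prod_congr rfl fun i _ => by rw [← pow_add]

lemma A_mul_prod_perm (hA : A.IsSymmetric)
    (hAW : A = (W.map fun w => monomial w (1 : ℤ)).sum)
    (β : Fin n → ℕ) (sg : Equiv.Perm (Fin n)) :
    A * ∏ i, (X i : MvPolynomial (Fin n) ℤ) ^ β (sg i)
      = (W.map fun w => ∏ i, (X i : MvPolynomial (Fin n) ℤ) ^ (w (sg i) + β (sg i))).sum := by
  have h1 : ∏ i, (X i : MvPolynomial (Fin n) ℤ) ^ β (sg i)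
      = rename (⇑sg⁻¹) (∏ i, (X i : MvPolynomial (Fin n) ℤ) ^ β i) := by
    rw [rename_prod_pow sg⁻¹ β]
    exact Finset.prod_congr rfl fun i _ => by rfl
  rw [h1, ← hA sg⁻¹]
  rw [← map_mul, A_mul_prod hAW β, map_multiset_sum, Multiset.map_map]
  refine congrArg Multiset.sum (Multiset.map_congr rfl fun w _ => ?_)
  show rename (⇑sg⁻¹) (∏ i, (X i : MvPolynomial (Fin n) ℤ) ^ (w i + β i)) = _
  rw [rename_prod_pow sg⁻¹ (fun i => w i + β i)]
  exact Finset.prod_congr rfl fun i _ => by rfl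

lemma aPol_apply (β : Fin n → ℕ) :
    aPol β = ∑ sg : Equiv.Perm (Fin n),
      ((Equiv.Perm.sign sg : ℤ) : MvPolynomial (Fin n) ℤ)
        * ∏ i, (X i : MvPolynomial (Fin n) ℤ) ^ β (sg i) := by
  rw [aPol, Matrix.det_apply']
  rfl

lemma A_mul_aPol (hA : A.IsSymmetric)
    (hAW : A = (W.map fun w => monomial w (1 : ℤ)).sum) (β : Fin n → ℕ) :
    A * aPol β = (W.map fun w => aPol (fun i => w i + β i)).sum := by
  rw [aPol_apply, Finset.mul_sum]
  have hterm : ∀ sg : Equiv.Perm (Fin n),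
      A * (((Equiv.Perm.sign sg : ℤ) : MvPolynomial (Fin n) ℤ)
          * ∏ i, (X i : MvPolynomial (Fin n) ℤ) ^ β (sg i))
      = (W.map fun w => ((Equiv.Perm.sign sg : ℤ) : MvPolynomial (Fin n) ℤ)
          * ∏ i, (X i : MvPolynomial (Fin n) ℤ) ^ (w (sg i) + β (sg i))).sum := by
    intro sg
    rw [mul_left_comm, A_mul_prod_perm hA hAW β sg, ← Multiset.sum_map_mul_left]
  rw [Finset.sum_congr rfl (fun sg _ => hterm sg),
    multiset_finset_sum_comm W _
      (fun sg w => ((Equiv.Perm.sign sg : ℤ) : MvPolynomial (Fin n) ℤ)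
          * ∏ i, (X i : MvPolynomial (Fin n) ℤ) ^ (w (sg i) + β (sg i)))]
  refine congrArg Multiset.sum (Multiset.map_congr rfl fun w _ => ?_)
  rw [aPol_apply]

end Amul

end Aux

/-- If `A = Σ_i x^{W_i}` is a symmetric sum of monomials, then there is a
partition `λ` such that every `λ + W_i` is a partition, and for any such `λ`,
`A · s_λ = Σ_i s_{λ + W_i}`; in particular `A · s_λ` is Schur positive. -/
theorem monomial_positive_mul_schur (n : ℕ) (W : Multiset (Fin n →₀ ℕ))
    (A : MvPolynomial (Fin n) ℤ) (hA : A.IsSymmetric)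
    (hAW : A = (W.map fun w => monomial w (1 : ℤ)).sum) :
    (∃ lam : Fin n → ℕ, Antitone lam ∧
      ∀ w ∈ W, Antitone (fun i => lam i + w i)) ∧
    ∀ lam : Fin n → ℕ, Antitone lam →
      (∀ w ∈ W, Antitone (fun i => lam i + w i)) →
      A * schur n lam = (W.map fun w => schur n (fun i => lam i + w i)).sum ∧
      SchurPositive n (A * schur n lam) := by
  classical
  constructor
  · -- existence of a suitable partition
    set M : ℕ := (W.map fun w => ∑ i, w i).sum with hM
    have hwM : ∀ w ∈ W, ∀ i, w i ≤ M := by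
      intro w hw i
      have h1 : w i ≤ ∑ i', w i' :=
        Finset.single_le_sum (f := fun i' => w i') (fun _ _ => Nat.zero_le _) (Finset.mem_univ i)
      have h2 : (∑ i', w i') ≤ M :=
        Multiset.single_le_sum (fun x _ => Nat.zero_le x) _ (Multiset.mem_map_of_mem _ hw)
      omega
    refine ⟨fun i => (n - 1 - (i : ℕ)) * M, ?_, ?_⟩
    · intro i j hij
      have hij' : (i : ℕ) ≤ (j : ℕ) := hij
      exact Nat.mul_le_mul_right M (by omega)
    · intro w hw i j hij
      have hij' : (i : ℕ) ≤ (j : ℕ) := hij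
      have hj : (j : ℕ) ≤ n - 1 := by omega
      have h1 : w j ≤ M := hwM w hw j
      show (n - 1 - (j : ℕ)) * M + w j ≤ (n - 1 - (i : ℕ)) * M + w i
      rcases Nat.eq_or_lt_of_le hij' with heq | hlt
      · have : i = j := Fin.ext heq
        rw [this]
      · have hstep : (n - 1 - (j : ℕ)) * M + M ≤ (n - 1 - (i : ℕ)) * M := by
          have hgap : n - 1 - (j : ℕ) + 1 ≤ n - 1 - (i : ℕ) := by omega
          calc (n - 1 - (j : ℕ)) * M + M = (n - 1 - (j : ℕ) + 1) * M := by ring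
            _ ≤ (n - 1 - (i : ℕ)) * M := Nat.mul_le_mul_right M hgap
        omega
  · intro lam hlam hlamW
    have key : A * schur n lam = (W.map fun w => schur n (fun i => lam i + w i)).sum := by
      apply mul_left_cancel₀ (aPol_delta_ne_zero (n := n))
      calc aPol (fun i => n - 1 - (i : ℕ)) * (A * schur n lam)
          = A * (aPol (fun i => n - 1 - (i : ℕ)) * schur n lam) := by ring
        _ = A * aPol (fun i => lam i + (n - 1 - (i : ℕ))) := by rw [jacobi_trudi]
        _ = (W.map fun w => aPol (fun i => w i + (lam i + (n - 1 - (i : ℕ))))).sum :=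
            A_mul_aPol hA hAW _
        _ = (W.map fun w =>
              aPol (fun i => n - 1 - (i : ℕ)) * schur n (fun i => lam i + w i)).sum := by
            refine congrArg Multiset.sum (Multiset.map_congr rfl fun w _ => ?_)
            rw [jacobi_trudi]
            congr 1
            funext i
            omega
        _ = aPol (fun i => n - 1 - (i : ℕ))
              * (W.map fun w => schur n (fun i => lam i + w i)).sum := by
            rw [← Multiset.sum_map_mul_left]
    refine ⟨key, ?_⟩
    refine ⟨Multiset.toFinsupp (W.map fun w => (fun i => lam i + w i)), ?_, ?_⟩
    · intro lam' hl'
      rw [Multiset.toFinsupp_support, Multiset.mem_toFinset, Multiset.mem_map] at hl'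
      obtain ⟨w, hw, rfl⟩ := hl'
      exact hlamW w hw
    · rw [key, Finsupp.sum]
      have hmm : (W.map fun w => schur n (fun i => lam i + w i))
          = (W.map fun w => (fun i => lam i + w i)).map (schur n) := by
        rw [Multiset.map_map]
        rfl
      rw [hmm, Finset.sum_multiset_map_count]
      refine Finset.sum_congr ?_ fun lam' _ => ?_
      · rw [Multiset.toFinsupp_support]
      · rw [Multiset.toFinsupp_apply, natCast_zsmul]
end

section
/- For integers a > b > 0, the following identity of Schur polynomials in three variables holds: s_{(b+1,b+1,0)} · s_{(a,b,0)} = s_{(a+1,b+1,0)} · s_{(b,b,0)} + s_{(a,b+1,b+1)} · s_{(b,0,0)}. -/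
open MvPolynomial

/-- For `a > b > 0`:
`s_{(b+1,b+1,0)} s_{(a,b,0)} = s_{(a+1,b+1,0)} s_{(b,b,0)} + s_{(a,b+1,b+1)} s_{(b,0,0)}`. -/
theorem schur_identity_family1_first (a b : ℕ) (hab : b < a) (hb : 0 < b) :
    schur 3 ![b + 1, b + 1, 0] * schur 3 ![a, b, 0] =
      schur 3 ![a + 1, b + 1, 0] * schur 3 ![b, b, 0] +
      schur 3 ![a, b + 1, b + 1] * schur 3 ![b, 0, 0] := by
  have h0 : hInt 3 0 = 1 := by simp [hInt]
  have hm1 : hInt 3 (-1) = 0 := by simp [hInt]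
  have hm2 : hInt 3 (-2) = 0 := by simp [hInt]
  simp only [schur, Matrix.det_fin_three, Matrix.of_apply, Matrix.cons_val', Matrix.cons_val_zero,
    Matrix.cons_val_one, Matrix.head_cons, Matrix.cons_val_two, Matrix.tail_cons,
    Matrix.empty_val', Matrix.cons_val_fin_one, Matrix.head_fin_const, Fin.isValue,
    Fin.val_zero, Fin.val_one, Fin.val_two]
  push_cast
  ring_nf
  simp only [h0, hm1, hm2]
  ring
end

section
/- For integers a > b > 0, the following identity of Schur polynomials in three variables holds: s_{(b+1,b+1,0)} · (s_{(a+1,b,0)} + s_{(a,b+1,0)}) = s_{(a+1,b+1,0)} · s_{(b+1,b,0)} + s_{(a,b+1,b+1)} · s_{(b+1,0,0)}. -/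
open MvPolynomial

/-- Abbreviation for the complete homogeneous symmetric polynomial in 3 variables. -/
noncomputable abbrev hh (k : ℕ) : MvPolynomial (Fin 3) ℤ := hsymm (Fin 3) ℤ k

lemma hInt_neg (k : ℤ) (hk : k < 0) : hInt 3 k = 0 := by simp [hInt, not_le.mpr hk]
lemma hInt_zero : hInt 3 0 = 1 := by simp [hInt]
lemma hEq (k : ℤ) (m : ℕ) (h : k = (m : ℤ)) : hInt 3 k = hh m := by subst h; simp [hInt]
lemma hA0 (k : ℕ) : hInt 3 (k : ℤ) = hh k := hEq _ _ rfl
lemma hA1 (k : ℕ) : hInt 3 ((k : ℤ) + 1) = hh (k+1) := hEq _ _ (by push_cast; ring)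
lemma hA2 (k : ℕ) : hInt 3 ((k : ℤ) + 1 + 1) = hh (k+2) := hEq _ _ (by push_cast; ring)
lemma hA3 (k : ℕ) : hInt 3 ((k : ℤ) + 1 + 1 + 1) = hh (k+3) := hEq _ _ (by push_cast; ring)
lemma hA2' (k : ℕ) : hInt 3 ((k : ℤ) + 2) = hh (k+2) := hEq _ _ (by push_cast; ring)
lemma hA12 (k : ℕ) : hInt 3 ((k : ℤ) + 1 + 2) = hh (k+3) := hEq _ _ (by push_cast; ring)
lemma hA21 (k : ℕ) : hInt 3 ((k : ℤ) + 2 + 1) = hh (k+3) := hEq _ _ (by push_cast; ring)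

/-- For `a > b > 0`:
`s_{(b+1,b+1,0)} (s_{(a+1,b,0)} + s_{(a,b+1,0)})
  = s_{(a+1,b+1,0)} s_{(b+1,b,0)} + s_{(a,b+1,b+1)} s_{(b+1,0,0)}`. -/
theorem schur_identity_family1_second (a b : ℕ) (hab : b < a) (hb : 0 < b) :
    schur 3 ![b + 1, b + 1, 0] * (schur 3 ![a + 1, b, 0] + schur 3 ![a, b + 1, 0]) =
      schur 3 ![a + 1, b + 1, 0] * schur 3 ![b + 1, b, 0] +
      schur 3 ![a, b + 1, b + 1] * schur 3 ![b + 1, 0, 0] := by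
  obtain ⟨c, rfl⟩ : ∃ c, b = c + 1 := ⟨b - 1, by omega⟩
  simp only [schur, Matrix.det_fin_three, Matrix.of_apply, Matrix.cons_val', Matrix.cons_val_zero,
    Matrix.cons_val_one, Matrix.head_cons, Matrix.cons_val_fin_one, Matrix.empty_val',
    Matrix.head_fin_const]
  push_cast
  norm_num [hInt_zero, hInt_neg]
  simp only [hA0, hA1, hA2, hA3, hA2', hA12, hA21]
  ring_nf
  rw [show hInt 3 (1 + (c:ℤ)) = hh (c+1) from hEq _ _ (by push_cast; ring),
      show hInt 3 ((c:ℕ) : ℤ) = hh c from hA0 c]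
  ring
end
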